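/- arXiv:1710.07546 — 2 statements merged into one kernel-verified Lean document; each statement's English description precedes it below -/
import Mathlib

section
/- Let G be a minimal non-sum-perfect graph (G is not sum-perfect but every proper induced subgraph of G is sum-perfect). Then for every vertex v of G, α(G − v) = α(G) and ω(G − v) = ω(G). -/
/-
By minimality the only induced subgraph violating sum-perfection is `G` itself, so
`α(G) + ω(G) < |V|`, while `G - v` is sum-perfect: `|V| - 1 ≤ α(G - v) + ω(G - v)`. Deleting a
vertex cannot increase `α` or `ω`, so neither can drop.
-/

open SimpleGraph Finset

/-- The clique number of a finite graph: the largest `n` such that `G` has an `n`-clique. -/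
noncomputable def omegaNum {V : Type*} [Fintype V] (G : SimpleGraph V) : ℕ :=
  sSup {n | ∃ s : Finset V, G.IsNClique n s}

/-- The stability (independence) number: the clique number of the complement. -/
noncomputable def alphaNum {V : Type*} [Fintype V] (G : SimpleGraph V) : ℕ :=
  omegaNum Gᶜ

/-- A graph is sum-perfect if every induced subgraph `H` satisfies `α(H) + ω(H) ≥ |V(H)|`. -/
def SumPerfect {V : Type*} [Fintype V] (G : SimpleGraph V) : Prop :=
  ∀ s : Finset V, s.card ≤ alphaNum (G.induce (s : Set V)) + omegaNum (G.induce (s : Set V))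

/-- `G` is minimally non-sum-perfect: not sum-perfect, but every proper induced subgraph is. -/
def MinimalNonSumPerfect {V : Type*} [Fintype V] (G : SimpleGraph V) : Prop :=
  ¬ SumPerfect G ∧ ∀ s : Finset V, s ≠ Finset.univ → SumPerfect (G.induce (s : Set V))

/-- `G` is threshold: there is an ordering of all vertices in which every vertex is adjacent
to all of the earlier vertices or to none of them. -/
def IsThreshold {V : Type*} [Fintype V] (G : SimpleGraph V) : Prop :=
  ∃ L : List V, L.Nodup ∧ (∀ v : V, v ∈ L) ∧
    ∀ (i j k : ℕ) (hi : i < L.length) (hj : j < L.length) (hk : k < L.length),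
      j < i → k < i →
        (G.Adj (L.get ⟨i, hi⟩) (L.get ⟨j, hj⟩) ↔ G.Adj (L.get ⟨i, hi⟩) (L.get ⟨k, hk⟩))

namespace SimpleGraph

variable {V W : Type*} {G : SimpleGraph V} {H : SimpleGraph W}

lemma omegaNum_eq_cliqueNum [Fintype V] (G : SimpleGraph V) : omegaNum G = G.cliqueNum := rfl

lemma alphaNum_eq_indepNum [Fintype V] (G : SimpleGraph V) : alphaNum G = G.indepNum :=
  cliqueNum_compl

lemma cliqueFree_cliqueNum_add_one [Finite V] (G : SimpleGraph V) :
    G.CliqueFree (G.cliqueNum + 1) := fun s hs ↦ by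
  have := IsClique.card_le_cliqueNum (tc := hs.isClique)
  rw [hs.card_eq] at this
  omega

lemma cliqueNum_le_of_isContained [Finite W] (h : G ⊑ H) : G.cliqueNum ≤ H.cliqueNum := by
  obtain ⟨s, hs⟩ := G.exists_isNClique_cliqueNum
  by_contra! hlt
  exact ((H.cliqueFree_cliqueNum_add_one.comap h).mono hlt) s hs

lemma indepNum_le_of_embedding [Finite W] (f : G ↪g H) : G.indepNum ≤ H.indepNum := by
  simpa using cliqueNum_le_of_isContained (Embedding.complEquiv f).isContained

lemma Iso.cliqueNum_eq [Finite V] [Finite W] (e : G ≃g H) : G.cliqueNum = H.cliqueNum :=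
  (cliqueNum_le_of_isContained e.isContained).antisymm (cliqueNum_le_of_isContained e.isContained')

lemma Iso.indepNum_eq [Finite V] [Finite W] (e : G ≃g H) : G.indepNum = H.indepNum :=
  (indepNum_le_of_embedding e.toEmbedding).antisymm (indepNum_le_of_embedding e.symm.toEmbedding)

lemma indepNum_induce_le [Finite V] (s : Set V) : (G.induce s).indepNum ≤ G.indepNum :=
  indepNum_le_of_embedding (Embedding.induce s)

lemma alphaNum_add_omegaNum_induce_univ [Fintype V] (G : SimpleGraph V) :
    alphaNum (G.induce ((univ : Finset V) : Set V)) +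
      omegaNum (G.induce ((univ : Finset V) : Set V)) = G.indepNum + G.cliqueNum := by
  rw [alphaNum_eq_indepNum, omegaNum_eq_cliqueNum, coe_univ, (induceUnivIso G).indepNum_eq,
    (induceUnivIso G).cliqueNum_eq]

lemma SumPerfect.card_le [Fintype V] (h : SumPerfect G) :
    Fintype.card V ≤ G.indepNum + G.cliqueNum := by
  rw [← alphaNum_add_omegaNum_induce_univ, ← card_univ]
  exact h univ

lemma MinimalNonSumPerfect.indepNum_add_cliqueNum_lt_card [Fintype V]
    (hG : MinimalNonSumPerfect G) : G.indepNum + G.cliqueNum < Fintype.card V := by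
  obtain ⟨hns, hmin⟩ := hG
  by_contra! hle
  refine hns fun s ↦ ?_
  by_cases hs : s = univ
  · rwa [hs, card_univ, alphaNum_add_omegaNum_induce_univ]
  · simpa [alphaNum_eq_indepNum, omegaNum_eq_cliqueNum] using (hmin s hs).card_le

lemma MinimalNonSumPerfect.card_sub_one_le_induce_compl_singleton [Fintype V] [DecidableEq V]
    (hG : MinimalNonSumPerfect G) (v : V) :
    Fintype.card V - 1 ≤
      (G.induce ({v}ᶜ : Set V)).indepNum + (G.induce ({v}ᶜ : Set V)).cliqueNum := by
  have hcard : Fintype.card (({v}ᶜ : Finset V) : Set V) = Fintype.card V - 1 :=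
    (Fintype.card_coe _).trans (by rw [card_compl, card_singleton])
  have := (hG.2 {v}ᶜ (by simp)).card_le
  rwa [hcard, coe_compl, coe_singleton] at this

end SimpleGraph

/-- In a minimal non-sum-perfect graph, deleting any vertex preserves both `α` and `ω`. -/
theorem stmt10 {V : Type*} [Fintype V] [DecidableEq V] (G : SimpleGraph V)
    (hG : MinimalNonSumPerfect G) :
    ∀ v : V, alphaNum (G.induce ({v}ᶜ : Set V)) = alphaNum G ∧
      omegaNum (G.induce ({v}ᶜ : Set V)) = omegaNum G := by
  intro v
  simp only [alphaNum_eq_indepNum, omegaNum_eq_cliqueNum]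
  have hlt := hG.indepNum_add_cliqueNum_lt_card
  have hdel := hG.card_sub_one_le_induce_compl_singleton v
  have hα := indepNum_induce_le (G := G) ({v}ᶜ : Set V)
  have hω := cliqueNum_induce_le (G := G) ({v}ᶜ : Set V)
  omega
end

section
/- Let G be a minimal non-sum-perfect graph with α(G) = ω(G) = 3. Then no vertex of G lies in every triangle of G, and G contains no two vertex-disjoint triangles. -/
/-!
The vertex set is the only induced subgraph that can violate `α + ω ≥ |V|`, and `α`, `ω` can only
drop on induced subgraphs, so `α + ω < |V|`. Applied to `G - v`, sum-perfectness gives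
`|V| - 1 ≤ α + ω(G - v) ≤ α + ω`; hence `|V| = α + ω + 1 = 7` and `ω(G - v) = 3`, so some triangle
avoids `v`. Two disjoint triangles would induce a proper subgraph on `6` vertices with `ω ≤ 3`,
hence with a stable set of size `3`; but a stable set meets each triangle in at most one vertex.
-/

open SimpleGraph Finset

namespace SimpleGraph

variable {V W : Type*} {G : SimpleGraph V} {H : SimpleGraph W}

theorem IsNClique.le_omegaNum [Fintype V] {n : ℕ} {s : Finset V} (h : G.IsNClique n s) :
    n ≤ omegaNum G :=
  h.card_eq ▸ IsClique.card_le_cliqueNum (tc := h.isClique)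

theorem exists_isNClique_of_le_omegaNum [Fintype V] {n : ℕ} (h : n ≤ omegaNum G) :
    ∃ s, G.IsNClique n s := by
  obtain ⟨s, hs⟩ := G.exists_isNClique_cliqueNum
  obtain ⟨t, hts, rfl⟩ := exists_subset_card_eq (h.trans hs.card_eq.ge)
  exact ⟨t, hs.isClique.subset hts, rfl⟩

theorem Embedding.omegaNum_le [Fintype V] [Fintype W] (f : G ↪g H) :
    omegaNum G ≤ omegaNum H := by
  obtain ⟨s, hs⟩ := G.exists_isNClique_cliqueNum
  exact (hs.map.mono ((map_le_iff_le_comap _ _ _).2 fun _ _ ↦ f.map_adj_iff.2)).le_omegaNum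

theorem Embedding.alphaNum_le [Fintype V] [Fintype W] (f : G ↪g H) :
    alphaNum G ≤ alphaNum H :=
  (Embedding.complEquiv f).omegaNum_le

theorem Iso.omegaNum_eq [Fintype V] [Fintype W] (e : G ≃g H) : omegaNum G = omegaNum H :=
  le_antisymm e.toEmbedding.omegaNum_le e.symm.toEmbedding.omegaNum_le

theorem Iso.alphaNum_eq [Fintype V] [Fintype W] (e : G ≃g H) : alphaNum G = alphaNum H :=
  le_antisymm e.toEmbedding.alphaNum_le e.symm.toEmbedding.alphaNum_le

def induceFinsetUnivIso [Fintype V] (G : SimpleGraph V) :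
    G.induce ↑(univ : Finset V) ≃g G where
  toEquiv := Equiv.subtypeUnivEquiv fun v ↦ Finset.mem_coe.2 (mem_univ v)
  map_rel_iff' := Iff.rfl

def induceComplIso (G : SimpleGraph V) (s : Set V) : (G.induce s)ᶜ ≃g Gᶜ.induce s where
  toEquiv := .refl _
  map_rel_iff' := by simp [Subtype.ext_iff]

theorem exists_isNClique_subset_of_le_omegaNum_induce {n : ℕ} {s : Finset V}
    (h : n ≤ omegaNum (G.induce s)) : ∃ t ⊆ s, G.IsNClique n t := by
  obtain ⟨t, ht⟩ := exists_isNClique_of_le_omegaNum h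
  refine ⟨t.map (.subtype _), fun v hv ↦ ?_, (isNClique_induce_iff _ _ _).1 ht⟩
  obtain ⟨w, -, rfl⟩ := mem_map.1 hv
  exact w.2

theorem exists_isNClique_compl_subset_of_le_alphaNum_induce {n : ℕ} {s : Finset V}
    (h : n ≤ alphaNum (G.induce s)) : ∃ t ⊆ s, Gᶜ.IsNClique n t :=
  exists_isNClique_subset_of_le_omegaNum_induce (h.trans (induceComplIso G s).omegaNum_eq.le)

theorem IsClique.card_inter_le_one [DecidableEq V] {S t : Finset V} (hS : Gᶜ.IsClique (S : Set V))
    (ht : G.IsClique (t : Set V)) : #(S ∩ t) ≤ 1 :=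
  card_le_one.2 fun a ha b hb ↦ by
    by_contra hab
    rw [mem_inter] at ha hb
    exact (hS ha.1 hb.1 hab).2 (ht ha.2 hb.2 hab)

theorem IsClique.card_le_two_of_subset_union [DecidableEq V] {S t₁ t₂ : Finset V}
    (hS : Gᶜ.IsClique (S : Set V)) (h₁ : G.IsClique (t₁ : Set V)) (h₂ : G.IsClique (t₂ : Set V))
    (hsub : S ⊆ t₁ ∪ t₂) : #S ≤ 2 :=
  calc #S = #(S ∩ t₁ ∪ S ∩ t₂) := by rw [← inter_union_distrib_left, inter_eq_left.2 hsub]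
    _ ≤ #(S ∩ t₁) + #(S ∩ t₂) := card_union_le _ _
    _ ≤ 1 + 1 := add_le_add (hS.card_inter_le_one h₁) (hS.card_inter_le_one h₂)

end SimpleGraph

section SumPerfect

variable {V : Type*} [Fintype V] {G : SimpleGraph V}

theorem SumPerfect.card_le (h : SumPerfect G) : Fintype.card V ≤ alphaNum G + omegaNum G := by
  have e := induceFinsetUnivIso G
  simpa [e.alphaNum_eq, e.omegaNum_eq] using h univ

namespace MinimalNonSumPerfect

theorem card_le_of_ne_univ (hG : MinimalNonSumPerfect G) {s : Finset V} (hs : s ≠ univ) :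
    #s ≤ alphaNum (G.induce s) + omegaNum (G.induce s) := by
  simpa using (hG.2 s hs).card_le

theorem alphaNum_add_omegaNum_lt_card (hG : MinimalNonSumPerfect G) :
    alphaNum G + omegaNum G < Fintype.card V := by
  by_contra! h
  refine hG.1 fun s ↦ ?_
  obtain rfl | hs := eq_or_ne s univ
  · have e := induceFinsetUnivIso G
    simpa [e.alphaNum_eq, e.omegaNum_eq] using h
  · exact hG.card_le_of_ne_univ hs

theorem card_sub_one_le [DecidableEq V] (hG : MinimalNonSumPerfect G) (v : V) :
    Fintype.card V - 1 ≤ alphaNum G + omegaNum (G.induce ↑(univ.erase v)) := by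
  have h := hG.card_le_of_ne_univ (s := univ.erase v) (erase_ssubset (mem_univ v)).ne
  rw [card_erase_of_mem (mem_univ v), card_univ] at h
  exact h.trans (Nat.add_le_add_right (Embedding.induce _).alphaNum_le _)

theorem card_eq (hG : MinimalNonSumPerfect G) :
    Fintype.card V = alphaNum G + omegaNum G + 1 := by
  classical
  have hlt := hG.alphaNum_add_omegaNum_lt_card
  obtain ⟨v⟩ : Nonempty V := Fintype.card_pos_iff.1 (by omega)
  have := hG.card_sub_one_le v
  have := (Embedding.induce (G := G) ↑(univ.erase v)).omegaNum_le
  omega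

theorem omegaNum_induce_erase [DecidableEq V] (hG : MinimalNonSumPerfect G) (v : V) :
    omegaNum (G.induce ↑(univ.erase v)) = omegaNum G := by
  have := hG.card_sub_one_le v
  have := hG.card_eq
  have := (Embedding.induce (G := G) ↑(univ.erase v)).omegaNum_le
  omega

end MinimalNonSumPerfect

end SumPerfect

/-- In a minimal non-sum-perfect graph with `α = ω = 3`, no vertex lies in every triangle,
and there are no two vertex-disjoint triangles. -/
theorem stmt13 {V : Type*} [Fintype V] (G : SimpleGraph V)
    (hG : MinimalNonSumPerfect G) (hα : alphaNum G = 3) (hω : omegaNum G = 3) :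
    (∀ v : V, ∃ t : Finset V, G.IsNClique 3 t ∧ v ∉ t) ∧
    ¬ ∃ t₁ t₂ : Finset V, G.IsNClique 3 t₁ ∧ G.IsNClique 3 t₂ ∧ Disjoint t₁ t₂ := by
  classical
  have hcard : Fintype.card V = 7 := by rw [hG.card_eq, hα, hω]
  refine ⟨fun v ↦ ?_, ?_⟩
  · obtain ⟨t, hts, ht⟩ :=
      exists_isNClique_subset_of_le_omegaNum_induce (hω ▸ hG.omegaNum_induce_erase v).ge
    exact ⟨t, ht, fun hv ↦ by simpa using hts hv⟩
  · rintro ⟨t₁, t₂, h₁, h₂, hd⟩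
    have h₁₂ : #(t₁ ∪ t₂) = 6 := by rw [card_union_of_disjoint hd, h₁.card_eq, h₂.card_eq]
    have hsum := hG.card_le_of_ne_univ (s := t₁ ∪ t₂) fun h ↦ by simp [h, hcard] at h₁₂
    have hω₁₂ := (Embedding.induce (G := G) ↑(t₁ ∪ t₂)).omegaNum_le
    obtain ⟨S, hS, hS3⟩ :=
      exists_isNClique_compl_subset_of_le_alphaNum_induce (G := G) (s := t₁ ∪ t₂) (n := 3) (by omega)
    have hS2 := hS3.isClique.card_le_two_of_subset_union h₁.isClique h₂.isClique hS
    rw [hS3.card_eq] at hS2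
    omega
end
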